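/- Let μ be a Borel probability measure on the torus 𝕋 = ℝ/ℤ, and suppose the n-fold convolution μⁿ has an absolutely continuous part with density bounded below by a constant c > 0 almost everywhere. Then for every f ∈ L^p(𝕋), 1 ≤ p ≤ ∞, with ∫_𝕋 f = 0: ‖f − f∗μ‖_{L^p(𝕋)} ≥ (c/n)·‖f‖_{L^p(𝕋)}. -/

import Mathlib

/-!
Put `ρ = μⁿ`. The density bound splits `ρ = ν + c • vol` with `ν(𝕋) = 1 - c`, and the uniform
part annihilates mean-zero functions, so Young's inequality `‖g ∗ ν‖_p ≤ ν(𝕋) ‖g‖_p` gives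
`‖f ∗ ρ‖_p ≤ (1 - c) ‖f‖_p`. Since `f - f ∗ μᵏ⁺¹ = (f - f ∗ μᵏ) + (f - f ∗ μ) ∗ μᵏ`, Young's
inequality also gives `‖f - f ∗ ρ‖_p ≤ n ‖f - f ∗ μ‖_p`. Hence
`‖f‖_p ≤ ‖f - f ∗ ρ‖_p + ‖f ∗ ρ‖_p ≤ n ‖f - f ∗ μ‖_p + (1 - c) ‖f‖_p`.
-/


open MeasureTheory
open scoped ENNReal

/-- Convolution of two measures on the torus `𝕋 = ℝ/ℤ`. -/
noncomputable def mconv (μ ν : Measure (AddCircle (1 : ℝ))) :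
    Measure (AddCircle (1 : ℝ)) :=
  Measure.map (fun p : AddCircle (1 : ℝ) × AddCircle (1 : ℝ) => p.1 + p.2) (μ.prod ν)

/-- The `n`-fold convolution power `μⁿ = μ ∗ ⋯ ∗ μ` (with `μ⁰ = δ₀`). -/
noncomputable def mconvPow (μ : Measure (AddCircle (1 : ℝ))) : ℕ → Measure (AddCircle (1 : ℝ))
  | 0 => Measure.dirac 0
  | n + 1 => mconv (mconvPow μ n) μ

/-- The convolution `f ∗ μ` of a function with a measure:
`(f ∗ μ)(x) = 𝔼 f(x - Y) = ∫ f(x - y) dμ(y)`. -/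
noncomputable def fconv (f : AddCircle (1 : ℝ) → ℝ) (μ : Measure (AddCircle (1 : ℝ))) :
    AddCircle (1 : ℝ) → ℝ :=
  fun x => ∫ y, f (x - y) ∂μ

theorem MeasureTheory.Measure.exists_eq_add_smul_of_ae_le_rnDeriv {α : Type*}
    [MeasurableSpace α] {μ ν : Measure α} [μ.HaveLebesgueDecomposition ν] {c : ℝ≥0∞}
    (h : ∀ᵐ x ∂ν, c ≤ μ.rnDeriv ν x) : ∃ μ' : Measure α, μ = μ' + c • ν := by
  refine ⟨μ.singularPart ν + ν.withDensity (fun x => μ.rnDeriv ν x - c), ?_⟩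
  rw [add_assoc, ← withDensity_const, ← withDensity_add_right _ measurable_const]
  conv_lhs => rw [← μ.singularPart_add_rnDeriv ν]
  congr 1
  refine withDensity_congr_ae ?_
  filter_upwards [h] with x hx
  exact (tsub_add_cancel_of_le hx).symm

local notation "𝕋" => AddCircle (1 : ℝ)

instance isProbabilityMeasure_mconvPow (μ : Measure 𝕋) [IsProbabilityMeasure μ] (n : ℕ) :
    IsProbabilityMeasure (mconvPow μ n) := by
  induction n with
  | zero => rw [mconvPow]; infer_instance
  | succ n ih => exact (inferInstance : IsProbabilityMeasure (mconvPow μ n ∗ μ))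

section

variable {f g : 𝕋 → ℝ} (ν : Measure 𝕋) {p : ℝ≥0∞}

theorem fconv_congr_ae [SFinite ν] (h : f =ᵐ[volume] g) : fconv f ν =ᵐ[volume] fconv g ν := by
  have h' : ∀ᵐ z ∂(volume.prod ν), f (z.1 - z.2) = g (z.1 - z.2) :=
    (quasiMeasurePreserving_sub_of_right_invariant volume ν).tendsto_ae.eventually h
  filter_upwards [Measure.ae_ae_of_ae_prod h'] with x hx
  exact integral_congr_ae hx

theorem aestronglyMeasurable_fconv [SFinite ν] (hf : AEStronglyMeasurable f volume) :
    AEStronglyMeasurable (fconv f ν) volume :=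
  (hf.comp_quasiMeasurePreserving
    (quasiMeasurePreserving_sub_of_right_invariant volume ν)).integral_prod_right'

theorem integrable_comp_sub_prod [IsFiniteMeasure ν] (hf : Integrable f volume) :
    Integrable (fun z : 𝕋 × 𝕋 => f (z.1 - z.2)) (volume.prod ν) := by
  refine (integrable_prod_iff' (hf.1.comp_quasiMeasurePreserving
    (quasiMeasurePreserving_sub_of_right_invariant volume ν))).2
    ⟨ae_of_all _ fun y => hf.comp_sub_right y, ?_⟩
  simp_rw [Function.comp_apply, integral_sub_right_eq_self (fun x => ‖f x‖)]
  exact integrable_const _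

theorem integrable_fconv [IsFiniteMeasure ν] (hf : Integrable f volume) :
    Integrable (fconv f ν) volume :=
  (integrable_comp_sub_prod ν hf).integral_prod_left

theorem fconv_sub_ae_eq [IsFiniteMeasure ν] (hf : Integrable f volume)
    (hg : Integrable g volume) :
    fconv (fun x => f x - g x) ν =ᵐ[volume] fun x => fconv f ν x - fconv g ν x := by
  filter_upwards [(integrable_comp_sub_prod ν hf).prod_right_ae,
    (integrable_comp_sub_prod ν hg).prod_right_ae] with x hfx hgx
  exact integral_sub hfx hgx

theorem fconv_mconv_ae_eq (ρ : Measure 𝕋) [IsFiniteMeasure ν] [IsFiniteMeasure ρ]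
    (hf : Integrable f volume) :
    fconv f (mconv ν ρ) =ᵐ[volume] fconv (fconv f ρ) ν := by
  filter_upwards [(integrable_comp_sub_prod (ν ∗ ρ) hf).prod_right_ae] with x hx
  change ∫ y, f (x - y) ∂(ν ∗ ρ) = ∫ y, ∫ z, f (x - y - z) ∂ρ ∂ν
  simp only [integral_conv hx, sub_add_eq_sub_sub]

theorem enorm_fconv_le (hf : StronglyMeasurable f) (hp : 1 ≤ p) (x : 𝕋) :
    ‖fconv f ν x‖ₑ ≤ eLpNorm (fun y => f (x - y)) p ν * ν Set.univ ^ (1 - 1 / p.toReal) :=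
  calc ‖fconv f ν x‖ₑ ≤ ∫⁻ y, ‖f (x - y)‖ₑ ∂ν := enorm_integral_le_lintegral_enorm _
    _ = eLpNorm (fun y => f (x - y)) 1 ν := eLpNorm_one_eq_lintegral_enorm.symm
    _ ≤ _ := by
      simpa using eLpNorm_le_eLpNorm_mul_rpow_measure_univ (f := fun y => f (x - y)) hp
        (hf.comp_measurable (measurable_const.sub measurable_id)).aestronglyMeasurable

theorem eLpNorm_top_fconv_le [SFinite ν] (hf : StronglyMeasurable f) :
    eLpNorm (fconv f ν) ∞ volume ≤ ν Set.univ * eLpNorm f ∞ volume := by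
  have hbound : ∀ᵐ x ∂volume, ∀ᵐ y ∂ν, ‖f (x - y)‖ₑ ≤ eLpNorm f ∞ volume :=
    Measure.ae_ae_of_ae_prod <| (quasiMeasurePreserving_sub_of_right_invariant volume ν
      ).tendsto_ae.eventually ae_le_eLpNormEssSup
  rw [eLpNorm_exponent_top]
  refine eLpNormEssSup_le_of_ae_enorm_bound ?_
  filter_upwards [hbound] with x hx
  calc ‖fconv f ν x‖ₑ ≤ eLpNorm (fun y => f (x - y)) ∞ ν * ν Set.univ := by
        simpa using enorm_fconv_le ν hf le_top x
    _ ≤ eLpNorm f ∞ volume * ν Set.univ := by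
        gcongr
        exact eLpNormEssSup_le_of_ae_enorm_bound hx
    _ = _ := mul_comm _ _

theorem eLpNorm_fconv_le_of_ne_top [IsFiniteMeasure ν] (hf : StronglyMeasurable f) (hp : 1 ≤ p)
    (hp_top : p ≠ ∞) : eLpNorm (fconv f ν) p volume ≤ ν Set.univ * eLpNorm f p volume := by
  lift p to NNReal using hp_top
  have hp0 : p ≠ 0 := by rintro rfl; simp at hp
  set q : ℝ := (p : ℝ) with hq_def
  have hq : 1 ≤ q := by exact_mod_cast hp
  have hq0 : 0 < q := by linarith
  have hν : ν Set.univ ^ (q - 1) ≠ ∞ :=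
    ENNReal.rpow_ne_top_of_nonneg (by linarith) (measure_ne_top ν _)
  have hνq : ν Set.univ ^ q = ν Set.univ * ν Set.univ ^ (q - 1) := by
    conv_lhs => rw [← sub_add_cancel q 1]
    rw [ENNReal.rpow_add_of_nonneg _ _ (by linarith) zero_le_one, ENNReal.rpow_one, mul_comm]
  rw [← ENNReal.rpow_le_rpow_iff hq0, eLpNorm_nnreal_pow_eq_lintegral hp0]
  calc ∫⁻ x, ‖fconv f ν x‖ₑ ^ q
      ≤ ∫⁻ x, (eLpNorm (fun y => f (x - y)) p ν * ν Set.univ ^ (1 - 1 / q)) ^ q :=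
        lintegral_mono fun x => by gcongr; exact enorm_fconv_le ν hf hp x
    _ = ∫⁻ x, (∫⁻ y, ‖f (x - y)‖ₑ ^ q ∂ν) * ν Set.univ ^ (q - 1) := by
        congr with x
        rw [ENNReal.mul_rpow_of_nonneg _ _ hq0.le, eLpNorm_nnreal_pow_eq_lintegral hp0,
          ← ENNReal.rpow_mul]
        congr 2
        field_simp
    _ = (∫⁻ y, ∫⁻ x, ‖f (x - y)‖ₑ ^ q ∂volume ∂ν) * ν Set.univ ^ (q - 1) := by
        rw [lintegral_mul_const' _ _ hν, lintegral_lintegral_swap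
          ((hf.measurable.comp measurable_sub).enorm.pow_const q).aemeasurable]
    _ = ν Set.univ * (∫⁻ x, ‖f x‖ₑ ^ q) * ν Set.univ ^ (q - 1) := by
        simp_rw [lintegral_sub_right_eq_self (fun x => ‖f x‖ₑ ^ q), lintegral_const,
          mul_comm (ν Set.univ)]
    _ = (ν Set.univ * eLpNorm f p volume) ^ q := by
        rw [ENNReal.mul_rpow_of_nonneg _ _ hq0.le, eLpNorm_nnreal_pow_eq_lintegral hp0, ← hq_def,
          hνq]
        ring

theorem eLpNorm_fconv_le [IsFiniteMeasure ν] (hf : AEStronglyMeasurable f volume) (hp : 1 ≤ p) :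
    eLpNorm (fconv f ν) p volume ≤ ν Set.univ * eLpNorm f p volume := by
  rw [eLpNorm_congr_ae (fconv_congr_ae ν hf.ae_eq_mk), eLpNorm_congr_ae hf.ae_eq_mk]
  rcases eq_or_ne p ∞ with rfl | hp_top
  · exact eLpNorm_top_fconv_le ν hf.stronglyMeasurable_mk
  · exact eLpNorm_fconv_le_of_ne_top ν hf.stronglyMeasurable_mk hp hp_top

theorem eLpNorm_sub_fconv_mconvPow_le (μ : Measure 𝕋) [IsProbabilityMeasure μ]
    (hf : Integrable f volume) (hp : 1 ≤ p) (k : ℕ) :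
    eLpNorm (fun x => f x - fconv f (mconvPow μ k) x) p volume
      ≤ k * eLpNorm (fun x => f x - fconv f μ x) p volume := by
  induction k with
  | zero => simp [mconvPow, fconv]
  | succ k ih =>
    have hsplit : (fun x => f x - fconv f (mconvPow μ (k + 1)) x) =ᵐ[volume]
        fun x => (f x - fconv f (mconvPow μ k) x)
          + fconv (fun x => f x - fconv f μ x) (mconvPow μ k) x := by
      filter_upwards [fconv_mconv_ae_eq (mconvPow μ k) μ hf,
        fconv_sub_ae_eq (mconvPow μ k) hf (integrable_fconv μ hf)] with x hmconv hsub
      rw [mconvPow, hmconv, hsub]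
      ring
    calc _ = eLpNorm (fun x => (f x - fconv f (mconvPow μ k) x)
          + fconv (fun x => f x - fconv f μ x) (mconvPow μ k) x) p volume :=
          eLpNorm_congr_ae hsplit
      _ ≤ eLpNorm (fun x => f x - fconv f (mconvPow μ k) x) p volume
          + eLpNorm (fconv (fun x => f x - fconv f μ x) (mconvPow μ k)) p volume :=
          eLpNorm_add_le (hf.1.sub (aestronglyMeasurable_fconv _ hf.1))
            (aestronglyMeasurable_fconv _ (hf.1.sub (aestronglyMeasurable_fconv _ hf.1))) hp
      _ ≤ k * eLpNorm (fun x => f x - fconv f μ x) p volume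
          + eLpNorm (fun x => f x - fconv f μ x) p volume := by
          gcongr
          exact (eLpNorm_fconv_le _ (hf.1.sub (aestronglyMeasurable_fconv μ hf.1)) hp).trans_eq
            (by rw [measure_univ, one_mul]; rfl)
      _ = (k + 1 : ℕ) * eLpNorm (fun x => f x - fconv f μ x) p volume := by
          push_cast
          ring

theorem eLpNorm_fconv_add_mul_le_of_ae_le_rnDeriv (ρ : Measure 𝕋) [IsProbabilityMeasure ρ]
    {c : ℝ≥0∞} (hρ : ∀ᵐ x, c ≤ ρ.rnDeriv volume x) (hf : Integrable f volume)
    (hmean : ∫ x, f x = 0) (hp : 1 ≤ p) :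
    eLpNorm (fconv f ρ) p volume + c * eLpNorm f p volume ≤ eLpNorm f p volume := by
  obtain ⟨ν, rfl⟩ := ρ.exists_eq_add_smul_of_ae_le_rnDeriv hρ
  have hmass : ν Set.univ + c = 1 := by
    rw [← measure_univ (μ := ν + c • volume), Measure.add_apply, Measure.smul_apply,
      AddCircle.measure_univ, ENNReal.ofReal_one, smul_eq_mul, mul_one]
  have : IsFiniteMeasure ν := ⟨le_self_add.trans_lt (hmass ▸ ENNReal.one_lt_top)⟩
  have hconv : fconv f (ν + c • volume) =ᵐ[volume] fconv f ν := by
    filter_upwards [(integrable_comp_sub_prod (ν + c • volume) hf).prod_right_ae] with x hx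
    rw [fconv, integral_add_measure (hx.mono_measure (Measure.le_add_right le_rfl))
      (hx.mono_measure (Measure.le_add_left le_rfl)), integral_smul_measure,
      integral_sub_left_eq_self f volume x, hmean, smul_zero, add_zero]
    rfl
  calc eLpNorm (fconv f (ν + c • volume)) p volume + c * eLpNorm f p volume
      = eLpNorm (fconv f ν) p volume + c * eLpNorm f p volume := by
        rw [eLpNorm_congr_ae hconv]
    _ ≤ ν Set.univ * eLpNorm f p volume + c * eLpNorm f p volume := by
        gcongr
        exact eLpNorm_fconv_le ν hf.1 hp
    _ = eLpNorm f p volume := by rw [← add_mul, hmass, one_mul]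

end

theorem stmt_19 (μ : Measure (AddCircle (1 : ℝ))) [IsProbabilityMeasure μ]
    (n : ℕ) (c : ℝ)
    (hdens : ∀ᵐ x : AddCircle (1 : ℝ),
      ENNReal.ofReal c ≤ (mconvPow μ n).rnDeriv volume x)
    (p : ℝ≥0∞) (hp : 1 ≤ p) (f : AddCircle (1 : ℝ) → ℝ)
    (hf : MemLp f p volume) (hmean : ∫ x, f x = 0) :
    eLpNorm (fun x => f x - fconv f μ x) p volume
      ≥ ENNReal.ofReal (c / n) * eLpNorm f p volume := by
  have hint : Integrable f volume := hf.integrable hp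
  set ρ := mconvPow μ n
  have hρf : AEStronglyMeasurable (fconv f ρ) volume := aestronglyMeasurable_fconv ρ hf.1
  have htri : eLpNorm f p volume
      ≤ eLpNorm (fun x => f x - fconv f ρ x) p volume + eLpNorm (fconv f ρ) p volume :=
    (eLpNorm_add_le (hf.1.sub hρf) hρf hp).trans_eq' (by rw [sub_add_cancel])
  have hcontr := eLpNorm_fconv_add_mul_le_of_ae_le_rnDeriv ρ hdens hint hmean hp
  have htele := eLpNorm_sub_fconv_mconvPow_le μ hint hp n
  have hkey : ENNReal.ofReal c * eLpNorm f p volume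
      ≤ n * eLpNorm (fun x => f x - fconv f μ x) p volume := by
    refine (ENNReal.add_le_add_iff_right hf.eLpNorm_ne_top).1 ?_
    calc _ ≤ ENNReal.ofReal c * eLpNorm f p volume
          + (eLpNorm (fun x => f x - fconv f ρ x) p volume + eLpNorm (fconv f ρ) p volume) := by
          gcongr
      _ = eLpNorm (fun x => f x - fconv f ρ x) p volume
          + (eLpNorm (fconv f ρ) p volume + ENNReal.ofReal c * eLpNorm f p volume) := by ring
      _ ≤ _ := add_le_add htele hcontr
  rcases n.eq_zero_or_pos with rfl | hn
  · simp
  rw [ge_iff_le, ENNReal.ofReal_div_of_pos (by positivity), ENNReal.ofReal_natCast,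
    div_eq_mul_inv, mul_right_comm, ← div_eq_mul_inv]
  exact ENNReal.div_le_of_le_mul' hkey
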